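/- Let A be a *-algebra, ‖·‖ a submultiplicative seminorm on A (i.e. ‖a b‖ ≤ ‖a‖ ‖b‖ for all a, b ∈ A), and ω an algebraic state on A that is continuous with respect to ‖·‖ in the sense that there exists a real constant C ≥ 0 with |ω(a)| ≤ C ‖a‖ for all a ∈ A. Then ω(b* a* a b) ≤ ‖a* a‖ holds for all a ∈ A and all b ∈ A with ω(b* b) = 1; in particular sup{ √(ω(b* a* a b)) : b ∈ A, ω(b* b) = 1 } ≤ ‖a* a‖^{1/2} < ∞ for every a ∈ A. -/

import Mathlib

open ComplexOrder

section Defs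

variable {A : Type*} [Ring A] [Algebra ℂ A] [StarRing A] [StarModule ℂ A]

/-- A linear functional is algebraically positive if `ω (a* a) ≥ 0` for all `a`. -/
def AlgPositive (ω : A →ₗ[ℂ] ℂ) : Prop := ∀ a : A, 0 ≤ ω (star a * a)

/-- An algebraic state is an algebraically positive linear functional with `ω 1 = 1`. -/
def AlgState (ω : A →ₗ[ℂ] ℂ) : Prop := AlgPositive ω ∧ ω 1 = 1

/-- The variance `Var_ω(a) = ω(a* a) - |ω a|²`. -/
noncomputable def Var (ω : A →ₗ[ℂ] ℂ) (a : A) : ℂ :=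
  ω (star a * a) - (Complex.normSq (ω a) : ℂ)

end Defs


section Helper

variable {A : Type*} [Ring A] [Algebra ℂ A] [StarRing A] [StarModule ℂ A]

set_option linter.unusedSectionVars false

private lemma pos_re {ω : A →ₗ[ℂ] ℂ} (h : AlgPositive ω) (a : A) : 0 ≤ (ω (star a * a)).re :=
  (Complex.nonneg_iff.mp (h a)).1

private lemma pos_im {ω : A →ₗ[ℂ] ℂ} (h : AlgPositive ω) (a : A) : (ω (star a * a)).im = 0 :=
  ((Complex.nonneg_iff.mp (h a)).2).symm

private lemma my_herm {ω : A →ₗ[ℂ] ℂ} (h : AlgPositive ω) (u v : A) :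
    ω (star v * u) = starRingEnd ℂ (ω (star u * v)) := by
  have e1 : star (u + v) * (u + v)
      = star u * u + (star u * v + (star v * u + star v * v)) := by
    rw [star_add]; noncomm_ring
  have e2 : star (u + Complex.I • v) * (u + Complex.I • v)
      = star u * u + (Complex.I • (star u * v) +
        ((-Complex.I) • (star v * u) + star v * v)) := by
    rw [star_add, star_smul]
    simp only [add_mul, mul_add, smul_mul_assoc, mul_smul_comm, smul_smul,
      Complex.star_def, Complex.conj_I, smul_add, smul_smul]
    rw [show Complex.I * -Complex.I = 1 by simp [Complex.I_mul_I], one_smul]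
    abel
  have h1 := pos_im h (u + v)
  have h2 := pos_im h (u + Complex.I • v)
  rw [e1] at h1
  rw [e2] at h2
  simp only [map_add, map_smul, smul_eq_mul, Complex.add_im, Complex.mul_im,
    Complex.I_re, Complex.I_im, Complex.neg_re, Complex.neg_im,
    pos_im h u, pos_im h v] at h1 h2
  apply Complex.ext <;> simp [Complex.conj_re, Complex.conj_im] <;> linarith

private lemma my_cs {ω : A →ₗ[ℂ] ℂ} (h : AlgPositive ω) (u v : A) :
    Complex.normSq (ω (star u * v)) ≤ (ω (star u * u)).re * (ω (star v * v)).re := by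
  have hα0 : 0 ≤ (ω (star u * u)).re := pos_re h u
  have hβ0 : 0 ≤ (ω (star v * v)).re := pos_re h v
  set z := ω (star u * v) with hz
  set α := (ω (star u * u)).re with hα
  set β := (ω (star v * v)).re with hβ
  have hq : ∀ t : ℝ, 0 ≤ (Complex.normSq z * α) * (t * t) + (2 * Complex.normSq z) * t + β := by
    intro t
    set c : ℂ := (t : ℂ) * z with hc
    have e : star (c • u + v) * (c • u + v)
        = (c * starRingEnd ℂ c) • (star u * u) + (starRingEnd ℂ c • (star u * v) +
          (c • (star v * u) + star v * v)) := by
      rw [star_add, star_smul]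
      simp only [add_mul, mul_add, smul_mul_assoc, mul_smul_comm, smul_add, smul_smul,
        Complex.star_def]
      abel
    have key : 0 ≤ ((c * starRingEnd ℂ c) * ω (star u * u) + (starRingEnd ℂ c * ω (star u * v)
        + (c * (starRingEnd ℂ (ω (star u * v))) + ω (star v * v)))).re := by
      rw [← my_herm h u v]
      have := pos_re h (c • u + v)
      rw [e] at this
      simpa only [map_add, map_smul, smul_eq_mul] using this
    have ere : ((c * starRingEnd ℂ c) * ω (star u * u) + (starRingEnd ℂ c * ω (star u * v)
        + (c * (starRingEnd ℂ (ω (star u * v))) + ω (star v * v)))).re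
        = (Complex.normSq z * α) * (t * t) + (2 * Complex.normSq z) * t + β := by
      simp only [← hz, ← hα, ← hβ, hc, Complex.add_re, Complex.mul_re, Complex.mul_im,
        Complex.conj_re, Complex.conj_im, Complex.ofReal_re, Complex.ofReal_im,
        Complex.normSq_apply, pos_im h u, mul_zero, sub_zero, zero_mul, neg_zero, add_zero,
        zero_sub, zero_add]
      ring
    rw [ere] at key
    exact key
  have hd := discrim_le_zero hq
  rw [discrim] at hd
  rcases eq_or_lt_of_le (Complex.normSq_nonneg z) with h0 | h0
  · rw [← h0]; positivity
  · have : Complex.normSq z * Complex.normSq z ≤ Complex.normSq z * (α * β) := by nlinarith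
    exact le_of_mul_le_mul_left this h0

private lemma p_nonneg (p : A → ℝ) (hhom : ∀ (c : ℂ) (a : A), p (c • a) = ‖c‖ * p a)
    (htri : ∀ a b : A, p (a + b) ≤ p a + p b) (a : A) : 0 ≤ p a := by
  have h0 : p 0 = 0 := by
    have := hhom 0 a; simpa using this
  have hneg : p (-a) = p a := by
    have := hhom (-1) a; simpa using this
  have := htri a (-a)
  rw [add_neg_cancel, h0, hneg] at this
  linarith

private lemma key {ω : A →ₗ[ℂ] ℂ} (p : A → ℝ) (hhom : ∀ (c : ℂ) (a : A), p (c • a) = ‖c‖ * p a)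
    (htri : ∀ a b : A, p (a + b) ≤ p a + p b)
    (hsub : ∀ a b : A, p (a * b) ≤ p a * p b)
    (hpos : AlgPositive ω) (hone : ω 1 = 1)
    (C : ℝ) (hC : 0 ≤ C) (hcont : ∀ a : A, ‖ω a‖ ≤ C * p a)
    (a b : A) (hb : ω (star b * b) = 1) :
    (ω (star b * (star a * a) * b)).re ≤ p (star a * a) ∧
    (ω (star b * (star a * a) * b)).im = 0 := by
  set x : A := star a * a with hx
  have hxstar : star x = x := by rw [hx, star_mul, star_star]
  -- squaring identity
  have hsq : ∀ n : ℕ, star (x ^ n * b) * (x ^ n * b) = star b * x ^ (2 * n) * b := by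
    intro n
    rw [star_mul, star_pow, hxstar, two_mul, pow_add]
    noncomm_ring
  -- factorization: star b * x^(k+1) * b is of the form star c * c
  have hfac : ∀ k : ℕ, ∃ c : A, star b * x ^ (k + 1) * b = star c * c := by
    intro k
    rcases Nat.even_or_odd (k + 1) with ⟨m, hm⟩ | ⟨m, hm⟩
    · exact ⟨x ^ m * b, by rw [hsq m, hm, two_mul]⟩
    · refine ⟨a * (x ^ m * b), ?_⟩
      have h2 : x ^ (k + 1) = x ^ m * x * x ^ m := by
        rw [hm, show 2 * m + 1 = m + 1 + m by ring, pow_add, pow_succ]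
      rw [h2, star_mul, star_mul, star_pow, hxstar, hx]
      noncomm_ring
  have hTpos : ∀ k : ℕ, 0 ≤ (ω (star b * x ^ (k + 1) * b)).re ∧
      (ω (star b * x ^ (k + 1) * b)).im = 0 := by
    intro k
    obtain ⟨c, hc⟩ := hfac k
    rw [hc]
    exact ⟨pos_re hpos c, pos_im hpos c⟩
  -- Cauchy-Schwarz step
  have hstep : ∀ n : ℕ, (ω (star b * x ^ (2 ^ n) * b)).re ^ 2
      ≤ (ω (star b * x ^ (2 ^ (n + 1)) * b)).re := by
    intro n
    have cs := my_cs hpos b (x ^ (2 ^ n) * b)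
    rw [← mul_assoc, hsq (2 ^ n), hb] at cs
    rw [show (2 : ℕ) * 2 ^ n = 2 ^ (n + 1) by ring] at cs
    have him : (ω (star b * x ^ (2 ^ n) * b)).im = 0 := by
      have h' := (hTpos (2 ^ n - 1)).2
      rwa [Nat.sub_add_cancel Nat.one_le_two_pow] at h' 
    rw [Complex.normSq_apply, him] at cs
    simpa [Complex.one_re, pow_two] using cs
  -- iterate
  have hiter : ∀ n : ℕ, (ω (star b * x * b)).re ^ (2 ^ n)
      ≤ (ω (star b * x ^ (2 ^ n) * b)).re := by
    intro n
    induction n with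
    | zero => simp
    | succ n ih =>
      have hnn : 0 ≤ (ω (star b * x * b)).re ^ (2 ^ n) := by
        apply pow_nonneg
        have := hTpos 0
        simpa using this.1
      calc (ω (star b * x * b)).re ^ (2 ^ (n + 1))
          = ((ω (star b * x * b)).re ^ (2 ^ n)) ^ 2 := by
            rw [← pow_mul, pow_succ]
        _ ≤ ((ω (star b * x ^ (2 ^ n) * b)).re) ^ 2 := by
            apply pow_le_pow_left₀ hnn ih
        _ ≤ (ω (star b * x ^ (2 ^ (n + 1)) * b)).re := hstep n
  -- power bound on p
  have hpx : 0 ≤ p x := p_nonneg p hhom htri x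
  have hppow : ∀ k : ℕ, p (x ^ (k + 1)) ≤ p x ^ (k + 1) := by
    intro k
    induction k with
    | zero => simp
    | succ k ih =>
      calc p (x ^ (k + 2)) = p (x ^ (k + 1) * x) := by rw [← pow_succ]
        _ ≤ p (x ^ (k + 1)) * p x := hsub _ _
        _ ≤ p x ^ (k + 1) * p x := by
            apply mul_le_mul_of_nonneg_right ih hpx
        _ = p x ^ (k + 2) := by rw [← pow_succ]
  -- norm bound
  set K : ℝ := C * (p (star b) * p b) with hK
  have hK0 : 0 ≤ K := by
    have := p_nonneg p hhom htri (star b)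
    have := p_nonneg p hhom htri b
    positivity
  have hbound : ∀ n : ℕ, (ω (star b * x ^ (2 ^ n) * b)).re ≤ K * p x ^ (2 ^ n) := by
    intro n
    have h1 : (ω (star b * x ^ (2 ^ n) * b)).re ≤ ‖ω (star b * x ^ (2 ^ n) * b)‖ :=
      Complex.re_le_norm _
    have h2 : p (star b * x ^ (2 ^ n) * b) ≤ p (star b) * (p (x ^ (2 ^ n)) * p b) := by
      calc p (star b * x ^ (2 ^ n) * b) ≤ p (star b * x ^ (2 ^ n)) * p b := hsub _ _
        _ ≤ (p (star b) * p (x ^ (2 ^ n))) * p b := by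
            apply mul_le_mul_of_nonneg_right (hsub _ _) (p_nonneg p hhom htri b)
        _ = p (star b) * (p (x ^ (2 ^ n)) * p b) := by ring
    have h3 : p (x ^ (2 ^ n)) ≤ p x ^ (2 ^ n) := by
      have := hppow (2 ^ n - 1)
      rwa [Nat.sub_add_cancel (Nat.one_le_two_pow)] at this
    have hpb := p_nonneg p hhom htri b
    have hpsb := p_nonneg p hhom htri (star b)
    calc (ω (star b * x ^ (2 ^ n) * b)).re ≤ ‖ω (star b * x ^ (2 ^ n) * b)‖ := h1
      _ ≤ C * p (star b * x ^ (2 ^ n) * b) := hcont _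
      _ ≤ C * (p (star b) * (p (x ^ (2 ^ n)) * p b)) := by
          apply mul_le_mul_of_nonneg_left h2 hC
      _ ≤ C * (p (star b) * (p x ^ (2 ^ n) * p b)) := by
          apply mul_le_mul_of_nonneg_left _ hC
          apply mul_le_mul_of_nonneg_left _ hpsb
          apply mul_le_mul_of_nonneg_right h3 hpb
      _ = K * p x ^ (2 ^ n) := by rw [hK]; ring
  -- conclude T0 ≤ p x
  set T : ℝ := (ω (star b * x * b)).re with hT
  have hT0 : 0 ≤ T := by have := hTpos 0; simpa [hT] using this.1
  have hTim : (ω (star b * x * b)).im = 0 := by have := hTpos 0; simpa using this.2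
  have hfinal : T ≤ p x := by
    by_contra hcon
    push_neg at hcon
    have hTpos' : 0 < T := lt_of_le_of_lt hpx hcon
    rcases eq_or_lt_of_le hpx with hp0 | hp0
    · have h0 := hbound 0
      simp only [pow_zero, pow_one] at h0
      rw [← hp0, mul_zero] at h0
      rw [← hT] at h0
      linarith
    · have hr : 1 < T / p x := (one_lt_div hp0).mpr hcon
      obtain ⟨n, hn⟩ := pow_unbounded_of_one_lt K hr
      have key2 : T ^ (2 ^ n) ≤ K * p x ^ (2 ^ n) := le_trans (hiter n) (hbound n)
      have h1 : (T / p x) ^ (2 ^ n) ≤ K := by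
        rw [div_pow, div_le_iff₀ (by positivity)]
        exact key2
      have h2 : (T / p x) ^ n ≤ (T / p x) ^ (2 ^ n) :=
        pow_le_pow_right₀ (le_of_lt hr) (Nat.le_of_lt (Nat.lt_two_pow_self (n := n)))
      exact absurd (le_trans h2 h1) (not_le.mpr hn)
  exact ⟨hfinal, hTim⟩

end Helper

/-- a state continuous w.r.t. a submultiplicative seminorm is a bounded
state for every element. -/
theorem statement11 {A : Type*} [Ring A] [Algebra ℂ A] [StarRing A] [StarModule ℂ A]
    (p : A → ℝ) (hhom : ∀ (c : ℂ) (a : A), p (c • a) = ‖c‖ * p a)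
    (htri : ∀ a b : A, p (a + b) ≤ p a + p b)
    (hsub : ∀ a b : A, p (a * b) ≤ p a * p b)
    (ω : A →ₗ[ℂ] ℂ) (hω : AlgState ω)
    (C : ℝ) (hC : 0 ≤ C) (hcont : ∀ a : A, ‖ω a‖ ≤ C * p a) :
    ∀ a : A,
      (∀ b : A, ω (star b * b) = 1 →
        ω (star b * (star a * a) * b) ≤ (p (star a * a) : ℂ)) ∧
      (⨆ (b : A) (_ : ω (star b * b) = 1),
          ENNReal.ofReal (Real.sqrt ((ω (star b * (star a * a) * b)).re))) ≤
        ENNReal.ofReal (Real.sqrt (p (star a * a))) ∧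
      (⨆ (b : A) (_ : ω (star b * b) = 1),
          ENNReal.ofReal (Real.sqrt ((ω (star b * (star a * a) * b)).re))) ≠ ⊤ := by
  intro a
  have hmain := fun (b : A) (hbb : ω (star b * b) = 1) =>
    key p hhom htri hsub hω.1 hω.2 C hC hcont a b hbb
  have hsup : (⨆ (b : A) (_ : ω (star b * b) = 1),
      ENNReal.ofReal (Real.sqrt ((ω (star b * (star a * a) * b)).re))) ≤
      ENNReal.ofReal (Real.sqrt (p (star a * a))) := by
    apply iSup_le; intro b; apply iSup_le; intro hbb
    exact ENNReal.ofReal_le_ofReal (Real.sqrt_le_sqrt (hmain b hbb).1)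
  refine ⟨?_, hsup, ne_top_of_le_ne_top ENNReal.ofReal_ne_top hsup⟩
  intro b hbb
  rw [Complex.le_def]
  exact ⟨by simpa using (hmain b hbb).1, by simp [(hmain b hbb).2]⟩
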